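/- The induction axiom □(φ⇒○φ) ⇒ (φ⇒□φ) is valid on every Gödel temporal bi-relational model. -/

import Mathlib

/-- Formulas of the Gödel temporal language. -/
inductive GF where
  | var : Nat → GF
  | and : GF → GF → GF
  | or : GF → GF → GF
  | imp : GF → GF → GF
  | coimp : GF → GF → GF
  | next : GF → GF
  | dia : GF → GF
  | box : GF → GF
deriving DecidableEq

/-- ⊥ := p ⇐ p -/
def GF.bot : GF := .coimp (.var 0) (.var 0)
/-- ⊤ := p ⇒ p -/
def GF.top : GF := .imp (.var 0) (.var 0)
/-- ¬φ := φ ⇒ ⊥ -/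
def GF.neg (φ : GF) : GF := .imp φ .bot
/-- φ ⟺ ψ := (φ⇒ψ) ∧ (ψ⇒φ) -/
def GF.iffF (φ ψ : GF) : GF := .and (.imp φ ψ) (.imp ψ φ)

/-- A Gödel temporal bi-relational model: (W,≤) a linear order, S : T → T,
and a valuation satisfying the standard semantic clauses. -/
structure BiModel where
  W : Type
  T : Type
  [ord : LinearOrder W]
  S : T → T
  val : GF → W → T → Prop
  var_dc : ∀ n w v t, val (.var n) w t → ord.le v w → val (.var n) v t
  and_iff : ∀ φ ψ w t, val (.and φ ψ) w t ↔ (val φ w t ∧ val ψ w t)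
  or_iff : ∀ φ ψ w t, val (.or φ ψ) w t ↔ (val φ w t ∨ val ψ w t)
  imp_iff : ∀ φ ψ w t, val (.imp φ ψ) w t ↔ (∀ v, ord.le v w → val φ v t → val ψ v t)
  coimp_iff : ∀ φ ψ w t, val (.coimp φ ψ) w t ↔ (∃ v, ord.le w v ∧ val φ v t ∧ ¬ val ψ v t)
  next_iff : ∀ φ w t, val (.next φ) w t ↔ val φ w (S t)
  dia_iff : ∀ φ w t, val (.dia φ) w t ↔ (∃ n : ℕ, val φ w (S^[n] t))
  box_iff : ∀ φ w t, val (.box φ) w t ↔ (∀ n : ℕ, val φ w (S^[n] t))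

namespace BiModel

attribute [local instance] BiModel.ord

theorem val_iterate_of_box_imp_next (M : BiModel) {φ : GF} {v u : M.W} {t : M.T}
    (hbox : M.val (.box (.imp φ (.next φ))) v t) (huv : u ≤ v) (hφ : M.val φ u t) (n : ℕ) :
    M.val φ u (M.S^[n] t) := by
  induction n with
  | zero => exact hφ
  | succ n ih =>
    have hstep := (M.imp_iff _ _ _ _).mp ((M.box_iff _ _ _).mp hbox n) u huv ih
    rw [Function.iterate_succ_apply']
    exact (M.next_iff _ _ _).mp hstep

end BiModel

/-- The induction axiom □(φ⇒○φ) ⇒ (φ⇒□φ) is globally true on every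
bi-relational model. -/
theorem stmt5 (M : BiModel) (φ : GF) (w : M.W) (t : M.T) :
    M.val (.imp (.box (.imp φ (.next φ))) (.imp φ (.box φ))) w t := by
  refine (M.imp_iff _ _ _ _).mpr fun v _ hbox => (M.imp_iff _ _ _ _).mpr fun u huv hφ => ?_
  exact (M.box_iff _ _ _).mpr (M.val_iterate_of_box_imp_next hbox huv hφ)
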